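/- arXiv:2512.01225 — 2 statements merged into one kernel-verified Lean document; each statement's English description precedes it below -/
import Mathlib

section
/- Pöschl–Teller transformation identity: Let w(x) = √(α(x)). Then for all x ∈ ℝ, w''(x)/w(x) − b(b+1) = 1/4 − (b(1+2b)/4)·sech²(νx). (This is the identity by which the change of variables f̃ = √α·f conjugates the weighted linearized operator 𝓛 to the Schrödinger operator H = (2k/b²)(−∂_x² + 1/4 − (b(1+2b)/4)sech²(νx)).) -/
open Real MeasureTheory Filter

noncomputable section

/-- `ν = -(b+1)/2`. -/
def nuP (b : ℝ) : ℝ := -(b + 1) / 2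

/-- The lefton momentum profile `Q(x) = (A(1-b)/2) (cosh(νx))^{b/ν}`. -/
def Qp (b A : ℝ) (x : ℝ) : ℝ :=
  A * (1 - b) / 2 * Real.cosh (nuP b * x) ^ (b / nuP b)

/-- The lefton velocity profile `q(x) = A (cosh(νx))^{-1/ν}`. -/
def qp (b A : ℝ) (x : ℝ) : ℝ := A * Real.cosh (nuP b * x) ^ (-1 / nuP b)

/-- `k = (A(1-b)/2)^{1/b+1}`. -/
def kP (b A : ℝ) : ℝ := (A * (1 - b) / 2) ^ (1 / b + 1)

/-- The weight `α(x) = Q(x)^{-1/b-2}`. -/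
def alphaP (b A : ℝ) (x : ℝ) : ℝ := Qp b A x ^ (-1 / b - 2)

/-- `SQ(x) = (2k(1-b)/b) Q^{-1/b} + (2(b-1)/b) Q`. -/
def SQp (b A : ℝ) (x : ℝ) : ℝ :=
  2 * kP b A * (1 - b) / b * Qp b A x ^ (-1 / b) + 2 * (b - 1) / b * Qp b A x

/-- The Pöschl–Teller potential `H̃₀(x) = 1/4 - (b(1+2b)/4) sech²(νx)`. -/
def Htilde0 (b : ℝ) (x : ℝ) : ℝ :=
  1 / 4 - b * (1 + 2 * b) / 4 * (1 / Real.cosh (nuP b * x)) ^ 2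

/-- The Schrödinger operator `(Hg)(x) = (2k/b²)(−g'' + H̃₀ g)`. -/
def Hop (b A : ℝ) (g : ℝ → ℝ) (x : ℝ) : ℝ :=
  2 * kP b A / b ^ 2 * (-(deriv (deriv g) x) + Htilde0 b x * g x)

/-- The linearized operator `(𝓛f)(x) = k(−((2α/b²) f')' − (2(b+1)/b) α f)`. -/
def Lop (b A : ℝ) (f : ℝ → ℝ) (x : ℝ) : ℝ :=
  kP b A * (-(deriv (fun y => 2 * alphaP b A y / b ^ 2 * deriv f y) x)
    - 2 * (b + 1) / b * alphaP b A x * f x)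

/-- The integrand of the conserved functional `F₂`. -/
def F2Integrand (b : ℝ) (f : ℝ → ℝ) (x : ℝ) : ℝ :=
  f x ^ (-1 / b) * ((deriv f x) ^ 2 / (b ^ 2 * f x ^ 2) + 1)

/-- The squared weighted norm `‖f‖²_{H¹_α} = ∫ (f² + f'²) α`. -/
def HalphaSq (b A : ℝ) (f : ℝ → ℝ) : ℝ :=
  ∫ x, (f x ^ 2 + deriv f x ^ 2) * alphaP b A x

/-- The `𝒵`-norm `‖f‖_𝒵 = ‖f‖_{H¹_α} + sup_x |f(x)|/Q(x)`. -/
def ZNorm (b A : ℝ) (f : ℝ → ℝ) : ℝ :=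
  Real.sqrt (HalphaSq b A f) + ⨆ x : ℝ, |f x| / Qp b A x

/-- `m : ℝ → ℝ → ℝ` (time then space) solves the b-family equation in momentum form,
with velocity `u` satisfying `m = u - u_xx` and `m_t + u m_x + b u_x m = 0`. -/
def IsBFamilySolution (b : ℝ) (m u : ℝ → ℝ → ℝ) : Prop :=
  (∀ t x, m t x = u t x - deriv (deriv (u t)) x) ∧
  ∀ t x, deriv (fun s => m s x) t + u t x * deriv (m t) x + b * deriv (u t) x * m t x = 0

/-- `(v, h)` solves the linearization of the b-family equation around the lefton:
`h - h_xx = v` and `v_t = ∂_x(q h_xx + (b-1) q' h_x - (b+1) q h + q'' h)`. -/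
def IsLinearizedSolution (b A : ℝ) (v h : ℝ → ℝ → ℝ) : Prop :=
  (∀ t x, h t x - deriv (deriv (h t)) x = v t x) ∧
  ∀ t x, deriv (fun s => v s x) t =
    deriv (fun y => qp b A y * deriv (deriv (h t)) y
      + (b - 1) * deriv (qp b A) y * deriv (h t) y
      - (b + 1) * qp b A y * h t y + deriv (deriv (qp b A)) y * h t y) x

/-- The quadratic form `(𝓛η, η) = (2k/b²)∫ η'² α − (2k(b+1)/b)∫ η² α`. -/
def quadFormL (b A : ℝ) (η : ℝ → ℝ) : ℝ :=
  2 * kP b A / b ^ 2 * (∫ x, deriv η x ^ 2 * alphaP b A x)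
    - 2 * kP b A * (b + 1) / b * (∫ x, η x ^ 2 * alphaP b A x)

/-- The monotonicity weight `ψ_L(x) = (2/π) arctan(exp(νx/L))` with `L = 3 - b`. -/
def psiL (b : ℝ) (x : ℝ) : ℝ :=
  2 / Real.pi * Real.arctan (Real.exp (nuP b * x / (3 - b)))

/-! Since `Q` is a constant times a power of `cosh (ν x)`, so is `w = √α`, namely
`w = c · cosh (ν x) ^ p` with `p = (1 + 2b)/(b + 1)`. Any such power satisfies
`w''/w = ν²p² − ν²p(p − 1) sech²(νx)`, and for `ν = −(b + 1)/2` the two constants are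
`(1 + 2b)²/4 = 1/4 + b(b + 1)` and `b(1 + 2b)/4`. -/

section CoshPower

variable (ν p : ℝ)

theorem hasDerivAt_cosh_mul_rpow (x : ℝ) :
    HasDerivAt (fun y => cosh (ν * y) ^ p) (sinh (ν * x) * ν * p * cosh (ν * x) ^ (p - 1)) x := by
  have hcosh : HasDerivAt (fun y => cosh (ν * y)) (sinh (ν * x) * ν) x := by
    simpa using ((hasDerivAt_id x).const_mul ν).cosh
  exact hcosh.rpow_const (Or.inl (cosh_pos _).ne')

theorem deriv_cosh_mul_rpow :
    deriv (fun y => cosh (ν * y) ^ p) = fun y => sinh (ν * y) * ν * p * cosh (ν * y) ^ (p - 1) :=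
  funext fun x => (hasDerivAt_cosh_mul_rpow ν p x).deriv

theorem deriv_deriv_cosh_mul_rpow_div (x : ℝ) :
    deriv (deriv fun y => cosh (ν * y) ^ p) x / cosh (ν * x) ^ p
      = ν ^ 2 * p ^ 2 - ν ^ 2 * (p * (p - 1)) * (1 / cosh (ν * x)) ^ 2 := by
  have hsinh : HasDerivAt (fun y => sinh (ν * y)) (cosh (ν * x) * ν) x := by
    simpa using ((hasDerivAt_id x).const_mul ν).sinh
  have hd : HasDerivAt (fun y => sinh (ν * y) * ν * p * cosh (ν * y) ^ (p - 1)) _ x :=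
    ((hsinh.mul_const ν).mul_const p).mul (hasDerivAt_cosh_mul_rpow ν (p - 1) x)
  rw [deriv_cosh_mul_rpow, hd.deriv]
  have hc : 0 < cosh (ν * x) := cosh_pos _
  have hsq : sinh (ν * x) ^ 2 = cosh (ν * x) ^ 2 - 1 := by linarith [cosh_sq (ν * x)]
  rw [sub_sub, rpow_sub hc, rpow_sub hc, rpow_add hc, rpow_one]
  field_simp
  linear_combination ν ^ 2 * p * (p - 1) * hsq

end CoshPower

theorem sqrt_alphaP {b A : ℝ} (hb : b < -1) (hA : 0 < A) (y : ℝ) :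
    √(alphaP b A y)
      = (A * (1 - b) / 2) ^ ((-1 / b - 2) / 2) * cosh (nuP b * y) ^ ((1 + 2 * b) / (b + 1)) := by
  have hC : 0 < A * (1 - b) / 2 := by nlinarith
  have hc : 0 < cosh (nuP b * y) := cosh_pos _
  have hexp : b / nuP b * (-1 / b - 2) / 2 = (1 + 2 * b) / (b + 1) := by
    have hb0 : b ≠ 0 := by linarith
    have hb1 : b + 1 ≠ 0 := by linarith
    unfold nuP
    field_simp
    ring
  rw [alphaP, Qp, sqrt_eq_rpow, ← rpow_mul (by positivity), mul_rpow hC.le (by positivity),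
    ← rpow_mul hc.le, mul_one_div, ← mul_div_assoc, hexp]

/-- **Pöschl–Teller transformation identity**: for `w = √α`,
`w''/w − b(b+1) = 1/4 − (b(1+2b)/4) sech²(νx)`. -/
theorem poschl_teller_identity (b A : ℝ) (hb : b < -1) (hA : 0 < A) :
    ∀ x : ℝ,
      deriv (deriv (fun y => Real.sqrt (alphaP b A y))) x / Real.sqrt (alphaP b A x)
          - b * (b + 1)
        = 1 / 4 - b * (1 + 2 * b) / 4 * (1 / Real.cosh (nuP b * x)) ^ 2 := by
  intro x
  have hC : 0 < (A * (1 - b) / 2) ^ ((-1 / b - 2) / 2) := rpow_pos_of_pos (by nlinarith) _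
  have hb1 : b + 1 ≠ 0 := by linarith
  simp only [sqrt_alphaP hb hA, deriv_const_mul_field']
  rw [mul_div_mul_left _ _ hC.ne', deriv_deriv_cosh_mul_rpow_div, nuP]
  field_simp
  ring
end
end

section
/- Differential identities for the lefton profile: For all x ∈ ℝ: (i) Q''(x) = b²·Q(x) − (b(3b+1)/(2k))·Q(x)^{1/b+2}; (ii) (Q'(x))² = b²·( Q(x)² − Q(x)^{1/b+3}/k ); and (iii) Q(x)^{1/b+1} = k·sech²(νx). -/
/-!
Write `Q = C cosh(νx)^p` with `p = b/ν`. Then `Q' = pν Q tanh(νx)`, so with `s = sech²(νx)`,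
`(Q')² = (pν)² Q² (1 - s)` and `Q'' = (pν)² Q - p(p-1)ν² Q s`. Since `pν = b` and `p(1/b + 1) = -2`,
`Q^{1/b+1} = C^{1/b+1} cosh(νx)^{-2} = k s`, which turns the `s`-terms into the powers of `Q`
appearing in (i) and (ii).
-/

open Real MeasureTheory Filter

noncomputable section

theorem Real.hasDerivAt_tanh (x : ℝ) : HasDerivAt tanh ((1 / cosh x) ^ 2) x := by
  have hquot := (hasDerivAt_sinh x).div (hasDerivAt_cosh x) (cosh_pos x).ne'
  rw [show tanh = sinh / cosh from funext tanh_eq_sinh_div_cosh]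
  refine hquot.congr_deriv ?_
  rw [← sq, ← sq, cosh_sq_sub_sinh_sq x]
  ring

theorem Real.tanh_sq_eq_one_sub (x : ℝ) : tanh x ^ 2 = 1 - (1 / cosh x) ^ 2 := by
  have hcosh := (cosh_pos x).ne'
  rw [tanh_eq_sinh_div_cosh]
  field_simp
  linear_combination -cosh_sq_sub_sinh_sq x

def coshRpow (C ν p : ℝ) (x : ℝ) : ℝ := C * cosh (ν * x) ^ p

namespace coshRpow

variable (C ν p : ℝ)

theorem hasDerivAt (x : ℝ) :
    HasDerivAt (coshRpow C ν p) (p * ν * coshRpow C ν p x * tanh (ν * x)) x := by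
  have hcosh := (cosh_pos (ν * x)).ne'
  have hchain := ((((hasDerivAt_id x).const_mul ν).cosh).rpow_const (p := p)
    (Or.inl hcosh)).const_mul C
  refine hchain.congr_deriv ?_
  simp only [coshRpow, id, tanh_eq_sinh_div_cosh, rpow_sub_one hcosh]
  field_simp

theorem deriv_eq : deriv (coshRpow C ν p) = fun x => p * ν * coshRpow C ν p x * tanh (ν * x) :=
  funext fun x => (hasDerivAt C ν p x).deriv

theorem deriv_sq (x : ℝ) :
    deriv (coshRpow C ν p) x ^ 2
      = (p * ν) ^ 2 * (coshRpow C ν p x ^ 2 - coshRpow C ν p x ^ 2 * (1 / cosh (ν * x)) ^ 2) := by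
  rw [deriv_eq, mul_pow, tanh_sq_eq_one_sub]
  ring

theorem deriv_deriv (x : ℝ) :
    deriv (deriv (coshRpow C ν p)) x
      = (p * ν) ^ 2 * coshRpow C ν p x
        - p * (p - 1) * ν ^ 2 * (coshRpow C ν p x * (1 / cosh (ν * x)) ^ 2) := by
  have htanh : HasDerivAt (fun y => tanh (ν * y)) ((1 / cosh (ν * x)) ^ 2 * ν) x :=
    ((hasDerivAt_tanh (ν * x)).comp x ((hasDerivAt_id' x).const_mul ν)).congr_deriv
      (by rw [mul_one])
  have hprod : HasDerivAt (fun y => p * ν * coshRpow C ν p y * tanh (ν * y)) _ x :=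
    ((hasDerivAt C ν p x).const_mul (p * ν)).mul htanh
  rw [deriv_eq, hprod.deriv]
  linear_combination (p * ν) ^ 2 * coshRpow C ν p x * tanh_sq_eq_one_sub (ν * x)

end coshRpow

section Lefton

variable {b : ℝ} (A : ℝ)

theorem nuP_pos (hb : b < -1) : 0 < nuP b := by
  unfold nuP
  linarith

theorem Qp_eq_coshRpow : Qp b A = coshRpow (A * (1 - b) / 2) (nuP b) (b / nuP b) := rfl

theorem Qp_pos (hb : b < -1) (hA : 0 < A) (x : ℝ) : 0 < Qp b A x := by
  have hC : 0 < A * (1 - b) / 2 := by nlinarith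
  exact mul_pos hC (rpow_pos_of_pos (cosh_pos _) _)

theorem kP_pos (hb : b < -1) (hA : 0 < A) : 0 < kP b A :=
  rpow_pos_of_pos (by nlinarith) _

theorem Qp_rpow_one_div_add_one (hb : b < -1) (hA : 0 < A) (x : ℝ) :
    Qp b A x ^ (1 / b + 1) = kP b A * (1 / cosh (nuP b * x)) ^ 2 := by
  have hC : 0 ≤ A * (1 - b) / 2 := by nlinarith
  have hcosh := cosh_pos (nuP b * x)
  have hexp : b / nuP b * (1 / b + 1) = -2 := by
    unfold nuP
    field_simp [show b + 1 ≠ 0 by linarith, show b ≠ 0 by linarith]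
    ring
  rw [Qp, mul_rpow hC (rpow_nonneg hcosh.le _), ← rpow_mul hcosh.le, hexp, kP,
    rpow_neg hcosh.le, rpow_ofNat, one_div_pow, inv_eq_one_div]

theorem Qp_rpow_one_div_add_one_add (hb : b < -1) (hA : 0 < A) (n : ℕ) (x : ℝ) :
    Qp b A x ^ (1 / b + 1 + n) = kP b A * (1 / cosh (nuP b * x)) ^ 2 * Qp b A x ^ n := by
  rw [rpow_add (Qp_pos A hb hA x), Qp_rpow_one_div_add_one A hb hA, rpow_natCast]

end Lefton

/-- **Differential identities for the lefton profile**: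
(i) `Q'' = b²Q − (b(3b+1)/(2k)) Q^{1/b+2}`;
(ii) `(Q')² = b²(Q² − Q^{1/b+3}/k)`;
(iii) `Q^{1/b+1} = k sech²(νx)`. -/
theorem lefton_differential_identities (b A : ℝ) (hb : b < -1) (hA : 0 < A) :
    (∀ x : ℝ, deriv (deriv (Qp b A)) x
        = b ^ 2 * Qp b A x - b * (3 * b + 1) / (2 * kP b A) * Qp b A x ^ (1 / b + 2)) ∧
    (∀ x : ℝ, (deriv (Qp b A) x) ^ 2
        = b ^ 2 * (Qp b A x ^ 2 - Qp b A x ^ (1 / b + 3) / kP b A)) ∧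
    ∀ x : ℝ, Qp b A x ^ (1 / b + 1) = kP b A * (1 / Real.cosh (nuP b * x)) ^ 2 := by
  have hpν : b / nuP b * nuP b = b := div_mul_cancel₀ b (nuP_pos hb).ne'
  have hk := (kP_pos A hb hA).ne'
  have hcoeff : b / nuP b * (b / nuP b - 1) * nuP b ^ 2 = b * (b - nuP b) := by
    linear_combination (b / nuP b * nuP b + b - nuP b) * hpν
  refine ⟨fun x => ?_, fun x => ?_, Qp_rpow_one_div_add_one A hb hA⟩
  · rw [show 1 / b + 2 = 1 / b + 1 + ((1 : ℕ) : ℝ) by push_cast; ring,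
      Qp_rpow_one_div_add_one_add A hb hA, Qp_eq_coshRpow, coshRpow.deriv_deriv, hpν, hcoeff]
    unfold nuP
    field_simp
    ring
  · rw [show 1 / b + 3 = 1 / b + 1 + ((2 : ℕ) : ℝ) by push_cast; ring,
      Qp_rpow_one_div_add_one_add A hb hA, Qp_eq_coshRpow, coshRpow.deriv_sq, hpν]
    field_simp
end
end
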